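/- arXiv:1910.04058 — 5 statements merged into one kernel-verified Lean document; each statement's English description precedes it below -/
import Mathlib

section
/- Let n ≥ 1 be an integer, 0 < α < 1, and let f be real-analytic on [0,∞) with f^{(k)}(x) = O(x^{n-α-ε-k}) as x → ∞ for all 0 ≤ k ≤ n and some ε > 0. Then the limit as ε ↓ 0 of ( ∫_ε^∞ x^{α-1-n} f(x) dx − ∑_{k=0}^{n-1} ε^{α-n+k} f^{(k)}(0)/(k!(n-α-k)) ) exists and is finite. -/
open MeasureTheory Real Set Filter Topology Asymptotics

/-!
For `k < n` the exponent `α - 1 - n + k` is `< -1`, so `∫_e^∞ x^(α-1-n+k) dx = e^(α-n+k)/(n-α-k)`: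
the subtracted sum is exactly the integral over `(e, ∞)` of `x^(α-1-n) T(x)`, where `T` is the
Taylor polynomial of `f` at `0` of degree `n - 1`. The expression is therefore
`∫_e^∞ x^(α-1-n) (f x - T x) dx`, and this integrand is integrable on all of `(0, ∞)`: it is
`O(x^(α-1))` at `0` by Taylor's formula, while at infinity `f` contributes `O(x^(-1-ε))` and `T`
only powers with exponent `< -1`. The limit is `∫_0^∞ x^(α-1-n) (f x - T x) dx`.
-/

theorem AnalyticAt.isBigO_sub_sum_iteratedDeriv {𝕜 : Type*} [NontriviallyNormedField 𝕜]
    [CompleteSpace 𝕜] [CharZero 𝕜] {f : 𝕜 → 𝕜} {x₀ : 𝕜} (hf : AnalyticAt 𝕜 f x₀) (n : ℕ) :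
    (fun y => f (x₀ + y) - ∑ k ∈ Finset.range n, iteratedDeriv k f x₀ / k.factorial * y ^ k)
      =O[𝓝 0] fun y => ‖y‖ ^ n := by
  simpa [FormalMultilinearSeries.partialSum, FormalMultilinearSeries.ofScalars_apply_eq, mul_comm]
    using hf.hasFPowerSeriesAt.isBigO_sub_partialSum_pow n

theorem Asymptotics.IsBigO.rpow_mul {l : Filter ℝ} {f : ℝ → ℝ} {s : ℝ} (r : ℝ)
    (hl : ∀ᶠ x in l, 0 < x) (hf : f =O[l] (· ^ s)) :
    (fun x => x ^ r * f x) =O[l] (· ^ (r + s)) := by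
  refine ((isBigO_refl (· ^ r) l).mul hf).congr' EventuallyEq.rfl ?_
  filter_upwards [hl] with x hx
  rw [rpow_add hx]

theorem integrableOn_Ioi_rpow_mul_of_isBigO_atTop {f : ℝ → ℝ} {r s a : ℝ} (ha : 0 < a)
    (hfc : ContinuousOn f (Ici a)) (hf : f =O[atTop] (· ^ s)) (hrs : r + s < -1) :
    IntegrableOn (fun x => x ^ r * f x) (Ioi a) := by
  have hc : ContinuousOn (fun x => x ^ r * f x) (Ici a) :=
    (continuousOn_id.rpow_const fun x hx => Or.inl (ha.trans_le hx).ne').mul hfc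
  refine (hc.locallyIntegrableOn measurableSet_Ici).integrableOn_of_isBigO_atTop
    (hf.rpow_mul r (eventually_gt_atTop 0)) ?_ |>.mono_set Ioi_subset_Ici_self
  exact integrableAtFilter_rpow_atTop_iff.2 hrs

theorem Asymptotics.IsBigO.integrableAtFilter_nhdsGT_zero {g : ℝ → ℝ} {s : ℝ}
    (hg : g =O[𝓝[>] 0] (· ^ s)) (hs : -1 < s) (hgc : ContinuousOn g (Ioi 0)) :
    IntegrableAtFilter g (𝓝[>] 0) :=
  hg.integrableAtFilter ⟨Ioi 0, self_mem_nhdsWithin, hgc.aestronglyMeasurable measurableSet_Ioi⟩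
    ⟨Ioo 0 1, Ioo_mem_nhdsGT one_pos, (intervalIntegral.integrableOn_Ioo_rpow_iff one_pos).2 hs⟩

section PowerTimesPolynomial

variable {r : ℝ} {n : ℕ} (c : ℕ → ℝ) {e : ℝ}

theorem rpow_mul_sum_pow_eqOn (he : 0 < e) :
    EqOn (fun x => x ^ r * ∑ k ∈ Finset.range n, c k * x ^ k)
      (fun x => ∑ k ∈ Finset.range n, c k * x ^ (r + k)) (Ioi e) := fun x hx => by
  simp only [Finset.mul_sum, rpow_add (he.trans hx), rpow_natCast]
  exact Finset.sum_congr rfl fun k _ => by ring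

theorem add_natCast_lt_neg_one_of_mem_range (hr : r + n < 0) {k : ℕ} (hk : k ∈ Finset.range n) :
    r + k < -1 := by
  have : (k : ℝ) + 1 ≤ n := by exact_mod_cast Finset.mem_range.1 hk
  linarith

theorem integrableOn_Ioi_rpow_mul_sum_pow (hr : r + n < 0) (he : 0 < e) :
    IntegrableOn (fun x => x ^ r * ∑ k ∈ Finset.range n, c k * x ^ k) (Ioi e) := by
  refine (integrableOn_congr_fun (rpow_mul_sum_pow_eqOn c he) measurableSet_Ioi).2 ?_
  exact integrable_finsetSum _ fun k hk =>
    (integrableOn_Ioi_rpow_of_lt (add_natCast_lt_neg_one_of_mem_range hr hk) he).const_mul _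

theorem integral_Ioi_rpow_mul_sum_pow (hr : r + n < 0) (he : 0 < e) :
    ∫ x in Ioi e, x ^ r * ∑ k ∈ Finset.range n, c k * x ^ k =
      ∑ k ∈ Finset.range n, c k * (-e ^ (r + k + 1) / (r + k + 1)) := by
  rw [setIntegral_congr_fun measurableSet_Ioi (rpow_mul_sum_pow_eqOn c he),
    integral_finsetSum _ fun k hk =>
      (integrableOn_Ioi_rpow_of_lt (add_natCast_lt_neg_one_of_mem_range hr hk) he).const_mul _]
  refine Finset.sum_congr rfl fun k hk => ?_
  rw [integral_const_mul, integral_Ioi_rpow_of_lt (add_natCast_lt_neg_one_of_mem_range hr hk) he]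

theorem integral_Ioi_rpow_mul_sub_sum_pow {g : ℝ → ℝ} (hr : r + n < 0) (he : 0 < e)
    (hg : IntegrableOn (fun x => x ^ r * g x) (Ioi e)) :
    ∫ x in Ioi e, x ^ r * (g x - ∑ k ∈ Finset.range n, c k * x ^ k) =
      (∫ x in Ioi e, x ^ r * g x) -
        ∑ k ∈ Finset.range n, c k * (-e ^ (r + k + 1) / (r + k + 1)) := by
  simp_rw [mul_sub]
  rw [integral_sub hg (integrableOn_Ioi_rpow_mul_sum_pow c hr he),
    integral_Ioi_rpow_mul_sum_pow c hr he]

end PowerTimesPolynomial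

theorem integrableOn_Ioi_rpow_mul_sub_taylor {f : ℝ → ℝ} {r s : ℝ} {n : ℕ}
    (hf₀ : AnalyticAt ℝ f 0) (hfc : ContinuousOn f (Ioi 0)) (hf : f =O[atTop] (· ^ s))
    (hrs : r + s < -1) (hrn₀ : -1 < r + n) (hrn : r + n < 0) :
    IntegrableOn (fun x => x ^ r *
      (f x - ∑ k ∈ Finset.range n, iteratedDeriv k f 0 / k.factorial * x ^ k)) (Ioi 0) := by
  have hc : ContinuousOn (fun x => x ^ r *
      (f x - ∑ k ∈ Finset.range n, iteratedDeriv k f 0 / k.factorial * x ^ k)) (Ioi 0) :=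
    (continuousOn_id.rpow_const fun x hx => Or.inl (ne_of_gt hx)).mul (hfc.sub (by fun_prop))
  refine integrableOn_Ioi_iff_integrableAtFilter_atTop_nhdsWithin.2
    ⟨⟨Ioi 1, Ioi_mem_atTop 1, ?_⟩, ?_, hc.locallyIntegrableOn measurableSet_Ioi⟩
  · simp_rw [mul_sub]
    exact (integrableOn_Ioi_rpow_mul_of_isBigO_atTop one_pos
      (hfc.mono fun x hx => mem_Ioi.2 (one_pos.trans_le hx)) hf hrs).sub
      (integrableOn_Ioi_rpow_mul_sum_pow _ hrn one_pos)
  · refine (IsBigO.rpow_mul r self_mem_nhdsWithin ?_).integrableAtFilter_nhdsGT_zero hrn₀ hc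
    refine ((hf₀.isBigO_sub_sum_iteratedDeriv n).mono nhdsWithin_le_nhds).congr' ?_ ?_
    · simp
    · filter_upwards [self_mem_nhdsWithin] with x hx
      rw [norm_of_nonneg (le_of_lt hx), rpow_natCast]

theorem stmt_3_general (n : ℕ) (α : ℝ) (hα0 : 0 < α) (hα1 : α < 1)
    (f : ℝ → ℝ) (hf : ∀ x ∈ Ici (0 : ℝ), AnalyticAt ℝ f x)
    (ε : ℝ) (hε : 0 < ε)
    (hdecay : ∀ k ≤ n,
      (iteratedDeriv k f) =O[atTop] fun x : ℝ => x ^ ((n : ℝ) - α - ε - k)) :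
    ∃ L : ℝ, Tendsto
      (fun e : ℝ => (∫ x in Ioi e, x ^ (α - 1 - n) * f x) -
        ∑ k ∈ Finset.range n,
          e ^ (α - n + k) * iteratedDeriv k f 0 / ((k.factorial : ℝ) * ((n : ℝ) - α - k)))
      (𝓝[>] 0) (𝓝 L) := by
  have hfc : ContinuousOn f (Ioi 0) := fun x hx =>
    (hf x (mem_Ici.2 (le_of_lt hx))).continuousAt.continuousWithinAt
  have hf_atTop : f =O[atTop] (· ^ ((n : ℝ) - α - ε)) := by simpa using hdecay 0 (Nat.zero_le n)
  have hG := integrableOn_Ioi_rpow_mul_sub_taylor (r := α - 1 - n) (hf 0 self_mem_Ici) hfc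
    hf_atTop (by linarith) (by linarith) (by linarith)
  refine ⟨_, (hG.continuousWithinAt_Ici_primitive_Ioi.mono Ioi_subset_Ici_self).tendsto.congr' ?_⟩
  filter_upwards [self_mem_nhdsWithin] with e (he : 0 < e)
  rw [integral_Ioi_rpow_mul_sub_sum_pow _ (by linarith) he
    (integrableOn_Ioi_rpow_mul_of_isBigO_atTop he (hfc.mono fun x hx => he.trans_le hx) hf_atTop
      (by linarith))]
  congr 1
  refine Finset.sum_congr rfl fun k _ => ?_
  rw [show α - 1 - n + k + 1 = α - n + k by ring, show (n : ℝ) - α - k = -(α - n + k) by ring]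
  field_simp

theorem stmt_3 (n : ℕ) (hn : 1 ≤ n) (α : ℝ) (hα0 : 0 < α) (hα1 : α < 1)
    (f : ℝ → ℝ) (hf : ∀ x ∈ Ici (0 : ℝ), AnalyticAt ℝ f x)
    (ε : ℝ) (hε : 0 < ε)
    (hdecay : ∀ k ≤ n,
      (iteratedDeriv k f) =O[atTop] fun x : ℝ => x ^ ((n : ℝ) - α - ε - k)) :
    ∃ L : ℝ, Tendsto
      (fun e : ℝ => (∫ x in Ioi e, x ^ (α - 1 - n) * f x) -
        ∑ k ∈ Finset.range n,
          e ^ (α - n + k) * iteratedDeriv k f 0 / ((k.factorial : ℝ) * ((n : ℝ) - α - k)))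
      (𝓝[>] 0) (𝓝 L) :=
  stmt_3_general n α hα0 hα1 f hf ε hε hdecay
end

section
/- Let n ≥ 1, 0 < α < 1, and f analytic in a neighborhood of 0 in ℂ. Then ∮_{|z|=ε} (−z)^{α-1-n} f(z) dz = −2i(−1)^{n+1} sin(πα) ∑_{k=0}^{n-1} ε^{α-n+k} f^{(k)}(0)/(k!(n-α-k)) + o(1) as ε ↓ 0, where the circle is traversed with argument θ from 0 to 2π and (−z)^{α-1-n} = (ε e^{i(θ-π)})^{α-1-n} on the circle. -/
open MeasureTheory Real Set Filter Topology Complex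

/-!
Taylor's theorem writes `f z = ∑_{k<n} f⁽ᵏ⁾(0)/k! z^k + z^n F z` with `F` bounded near `0`.
On the circle, `(-z)^a = ε^a e^{ia(θ-π)}` for `0 < θ ≤ 2π`, so with `a = α - 1 - n` the
monomial `z^k` contributes the elementary integral `2i(-1)^{k+1} ε^s sin(πs)/s`, where
`s = a + k + 1 = α - n + k < 0`; this is the `k`-th term of the sum. The remainder `z^n F z`
contributes at most `2π ε^{α-1-n} ε^n ε sup|F| = O(ε^α)`.
-/

/-- `∮_{|z|=ε} (-z)^a g(z) dz` along `z = ε e^{iθ}`, `0 ≤ θ ≤ 2π`, where `(-z)^a` is the principal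
power of `ε e^{i(θ-π)}`. -/
noncomputable def negCpowCircleIntegral (a : ℂ) (ε : ℝ) (g : ℂ → ℂ) : ℂ :=
  ∫ θ in (0 : ℝ)..(2 * π), ((ε : ℂ) * exp (I * ((θ - π : ℝ) : ℂ))) ^ a *
    g ((ε : ℂ) * exp (I * (θ : ℂ))) * (I * (ε : ℂ) * exp (I * (θ : ℂ)))

theorem Complex.ofReal_mul_exp_I_mul_cpow {ε φ : ℝ} (hε : 0 < ε) (hφ : φ ∈ Ioc (-π) π) (a : ℂ) :
    ((ε : ℂ) * exp (I * φ)) ^ a = (ε : ℂ) ^ a * exp (a * (I * φ)) := by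
  have hlog : log (exp (I * φ)) = I * φ := log_exp (by simpa using hφ.1) (by simpa using hφ.2)
  rw [cpow_def_of_ne_zero (mul_ne_zero (ofReal_ne_zero.mpr hε.ne') (exp_ne_zero _)),
    cpow_def_of_ne_zero (ofReal_ne_zero.mpr hε.ne'), log_ofReal_mul hε (exp_ne_zero _), hlog,
    ofReal_log hε.le, add_mul, exp_add, mul_comm (I * φ)]

section
variable (a : ℂ) {ε : ℝ}

theorem negCpowCircleIntegral_eq_integral (hε : 0 < ε) (g : ℂ → ℂ) :
    negCpowCircleIntegral a ε g = ∫ θ in (0 : ℝ)..(2 * π),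
      (ε : ℂ) ^ a * exp (a * (I * ((θ - π : ℝ) : ℂ))) *
        g ((ε : ℂ) * exp (I * (θ : ℂ))) * (I * (ε : ℂ) * exp (I * (θ : ℂ))) := by
  refine intervalIntegral.integral_congr_ae (.of_forall fun θ hθ => ?_)
  rw [uIoc_of_le (by positivity)] at hθ
  rw [ofReal_mul_exp_I_mul_cpow hε ⟨by linarith [hθ.1], by linarith [hθ.2]⟩]

theorem ContinuousOn.comp_ofReal_mul_exp_I_mul {g : ℂ → ℂ}
    (hg : ContinuousOn g (Metric.sphere 0 ε)) (hε : 0 ≤ ε) :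
    Continuous fun θ : ℝ => g ((ε : ℂ) * exp (I * (θ : ℂ))) :=
  hg.comp_continuous (by fun_prop) fun θ => by
    simp [norm_exp, abs_of_nonneg hε]

theorem intervalIntegrable_negCpowCircleIntegrand {g : ℂ → ℂ} (hε : 0 < ε)
    (hg : ContinuousOn g (Metric.sphere 0 ε)) :
    IntervalIntegrable (fun θ : ℝ => (ε : ℂ) ^ a * exp (a * (I * ((θ - π : ℝ) : ℂ))) *
        g ((ε : ℂ) * exp (I * (θ : ℂ))) * (I * (ε : ℂ) * exp (I * (θ : ℂ)))) volume 0 (2 * π) := by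
  have hkernel : Continuous fun θ : ℝ => (ε : ℂ) ^ a * exp (a * (I * ((θ - π : ℝ) : ℂ))) := by
    fun_prop
  exact ((hkernel.mul (hg.comp_ofReal_mul_exp_I_mul hε.le)).mul (by fun_prop)).intervalIntegrable
    _ _

theorem negCpowCircleIntegral_add {g h : ℂ → ℂ} (hε : 0 < ε)
    (hg : ContinuousOn g (Metric.sphere 0 ε)) (hh : ContinuousOn h (Metric.sphere 0 ε)) :
    negCpowCircleIntegral a ε (g + h) =
      negCpowCircleIntegral a ε g + negCpowCircleIntegral a ε h := by
  simp only [negCpowCircleIntegral_eq_integral a hε, Pi.add_apply, mul_add, add_mul]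
  exact intervalIntegral.integral_add (intervalIntegrable_negCpowCircleIntegrand a hε hg)
    (intervalIntegrable_negCpowCircleIntegrand a hε hh)

theorem negCpowCircleIntegral_finsetSum {ι : Type*} (s : Finset ι) {g : ι → ℂ → ℂ} (hε : 0 < ε)
    (hg : ∀ i ∈ s, ContinuousOn (g i) (Metric.sphere 0 ε)) :
    negCpowCircleIntegral a ε (fun z => ∑ i ∈ s, g i z) =
      ∑ i ∈ s, negCpowCircleIntegral a ε (g i) := by
  simp only [negCpowCircleIntegral_eq_integral a hε, Finset.mul_sum, Finset.sum_mul]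
  exact intervalIntegral.integral_finsetSum fun i hi =>
    intervalIntegrable_negCpowCircleIntegrand a hε (hg i hi)

theorem negCpowCircleIntegral_mul_const (ε : ℝ) (g : ℂ → ℂ) (c : ℂ) :
    negCpowCircleIntegral a ε (fun z => g z * c) = negCpowCircleIntegral a ε g * c := by
  simp only [negCpowCircleIntegral, ← intervalIntegral.integral_mul_const]
  congr 1 with θ
  ring

theorem negCpowCircleIntegral_pow (hε : 0 < ε) (k : ℕ) (hs : a + k + 1 ≠ 0) :
    negCpowCircleIntegral a ε (· ^ k) =
      2 * I * (-1) ^ (k + 1) * (ε : ℂ) ^ (a + k + 1) * sin (π * (a + k + 1)) / (a + k + 1) := by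
  set s := a + k + 1
  have hε' : (ε : ℂ) ≠ 0 := ofReal_ne_zero.mpr hε.ne'
  have hintegrand : ∀ θ : ℝ, (ε : ℂ) ^ a * exp (a * (I * ((θ - π : ℝ) : ℂ))) *
      ((ε : ℂ) * exp (I * (θ : ℂ))) ^ k * (I * (ε : ℂ) * exp (I * (θ : ℂ))) =
      I * (ε : ℂ) ^ s * exp (-a * π * I) * exp (s * I * θ) := by
    intro θ
    rw [cpow_add _ _ hε', cpow_add _ _ hε', cpow_natCast, cpow_one, mul_pow,
      ← Complex.exp_nat_mul,
      show s * I * θ = a * (I * ((θ - π : ℝ) : ℂ)) + k * (I * θ) + I * θ + a * π * I by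
        push_cast; ring]
    simp only [Complex.exp_add, neg_mul, Complex.exp_neg]
    field_simp
  have hsI : s * I ≠ 0 := mul_ne_zero hs I_ne_zero
  rw [negCpowCircleIntegral_eq_integral a hε]
  simp only [hintegrand, intervalIntegral.integral_const_mul, integral_exp_mul_complex hsI]
  have hexp_a : exp (-a * π * I) = (-1) ^ (k + 1) * (exp (s * π * I))⁻¹ := by
    rw [← Complex.exp_neg, show -a * π * I = ((k + 1 : ℕ) : ℂ) * (π * I) + -(s * π * I) by
      push_cast; ring, Complex.exp_add, Complex.exp_nat_mul, exp_pi_mul_I]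
  have hexp_2s : exp (s * I * (2 * π : ℝ)) = exp (s * π * I) * exp (s * π * I) := by
    rw [← Complex.exp_add]; push_cast; ring_nf
  have hsin : sin (π * s) = ((exp (s * π * I))⁻¹ - exp (s * π * I)) * I / 2 := by
    rw [Complex.sin, ← Complex.exp_neg]; ring_nf
  rw [hexp_a, hexp_2s, hsin]
  push_cast
  simp only [mul_zero, Complex.exp_zero]
  field_simp
  linear_combination (ε : ℂ) ^ s * (exp (I * s * π) ^ 2 - 1) * I_sq
end

theorem norm_negCpowCircleIntegral_le (a : ℝ) {ε M : ℝ} (hε : 0 < ε) {g : ℂ → ℂ}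
    (hg : ∀ z, ‖z‖ = ε → ‖g z‖ ≤ M) :
    ‖negCpowCircleIntegral a ε g‖ ≤ 2 * π * ε ^ (a + 1) * M := by
  have hz : ∀ φ : ℝ, ‖(ε : ℂ) * exp (I * φ)‖ = ε := by simp [norm_exp, abs_of_pos hε]
  have hbound : ∀ θ ∈ uIoc 0 (2 * π), ‖((ε : ℂ) * exp (I * ((θ - π : ℝ) : ℂ))) ^ (a : ℂ) *
      g ((ε : ℂ) * exp (I * (θ : ℂ))) * (I * (ε : ℂ) * exp (I * (θ : ℂ)))‖ ≤ ε ^ (a + 1) * M := by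
    intro θ _
    rw [norm_mul, norm_mul, norm_cpow_real, hz, mul_assoc I, norm_mul, norm_I, one_mul, hz,
      rpow_add_one hε.ne']
    calc ε ^ a * ‖g _‖ * ε ≤ ε ^ a * M * ε := by gcongr; exact hg _ (hz θ)
      _ = ε ^ a * ε * M := by ring
  calc _ ≤ ε ^ (a + 1) * M * |2 * π - 0| :=
        intervalIntegral.norm_integral_le_of_norm_le_const hbound
    _ = _ := by rw [sub_zero, abs_of_pos (by positivity)]; ring

theorem negCpowCircleIntegral_taylorPoly {n : ℕ} {α ε : ℝ} (hα : α < 1) (hε : 0 < ε)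
    (c : ℕ → ℂ) :
    negCpowCircleIntegral ((α - 1 - n : ℝ) : ℂ) ε
        (fun z => ∑ k ∈ Finset.range n, (z ^ k / k.factorial) • c k) =
      -(2 * I * (-1) ^ (n + 1) * ((Real.sin (π * α) : ℝ) : ℂ) *
        ∑ k ∈ Finset.range n, ((ε ^ (α - n + k) : ℝ) : ℂ) * c k /
          ((k.factorial : ℂ) * (((n : ℝ) - α - k : ℝ) : ℂ))) := by
  simp only [smul_eq_mul, div_mul_eq_mul_div, mul_div_assoc]
  rw [negCpowCircleIntegral_finsetSum _ _ hε fun k _ => by fun_prop, Finset.mul_sum,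
    ← Finset.sum_neg_distrib]
  refine Finset.sum_congr rfl fun k hk => ?_
  have hk : k < n := Finset.mem_range.mp hk
  have hs : ((α - 1 - n : ℝ) : ℂ) + k + 1 = ((α - n + k : ℝ) : ℂ) := by push_cast; ring
  have hs0 : α - n + k ≠ 0 := by
    have : (k : ℝ) + 1 ≤ n := by exact_mod_cast hk
    linarith
  have hsin : Real.sin (π * (α - n + k)) = (-1) ^ (n - k) * Real.sin (π * α) := by
    rw [show π * (α - n + k) = π * α - (n - k : ℕ) * π by push_cast [Nat.cast_sub hk.le]; ring,
      sin_sub_nat_mul_pi]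
  have hsign : ((-1) ^ (k + 1) * (-1) ^ (n - k) : ℂ) = (-1) ^ (n + 1) := by
    rw [← pow_add]; congr 1; omega
  rw [negCpowCircleIntegral_mul_const,
    negCpowCircleIntegral_pow _ hε _ (hs ▸ ofReal_ne_zero.mpr hs0), hs, ← ofReal_cpow hε.le,
    ← ofReal_mul, ← ofReal_sin, hsin,
    show (n : ℝ) - α - k = -(α - n + k) by ring, ← hsign]
  push_cast
  field_simp

theorem negCpowCircleIntegral_eq_taylorPoly_add {n : ℕ} {α ε r : ℝ} (hα : α < 1) (hε : 0 < ε)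
    (hεr : ε < r) {f : ℂ → ℂ} (hf : ContinuousOn f (Metric.ball 0 r)) (c : ℕ → ℂ) :
    negCpowCircleIntegral ((α - 1 - n : ℝ) : ℂ) ε f =
      -(2 * I * (-1) ^ (n + 1) * ((Real.sin (π * α) : ℝ) : ℂ) *
        ∑ k ∈ Finset.range n, ((ε ^ (α - n + k) : ℝ) : ℂ) * c k /
          ((k.factorial : ℂ) * (((n : ℝ) - α - k : ℝ) : ℂ))) +
      negCpowCircleIntegral ((α - 1 - n : ℝ) : ℂ) ε
        (fun z => f z - ∑ k ∈ Finset.range n, (z ^ k / k.factorial) • c k) := by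
  set P : ℂ → ℂ := fun z => ∑ k ∈ Finset.range n, (z ^ k / k.factorial) • c k
  have hP : Continuous P := by fun_prop
  have hfP : ContinuousOn (f - P) (Metric.sphere 0 ε) :=
    (hf.mono (Metric.sphere_subset_ball hεr)).sub hP.continuousOn
  have hsplit := negCpowCircleIntegral_add ((α - 1 - n : ℝ) : ℂ) hε hP.continuousOn hfP
  rw [add_sub_cancel, negCpowCircleIntegral_taylorPoly hα hε c] at hsplit
  exact hsplit

theorem stmt_6_general (n : ℕ) (α : ℝ) (hα0 : 0 < α) (hα1 : α < 1)
    (f : ℂ → ℂ) (r : ℝ) (hr : 0 < r)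
    (hf : AnalyticOn ℂ f (Metric.ball (0 : ℂ) r)) :
    Tendsto (fun e : ℝ =>
      (∫ θ in (0 : ℝ)..(2 * Real.pi),
          ((e : ℂ) * Complex.exp (Complex.I * ((θ - Real.pi : ℝ) : ℂ))) ^ ((α - 1 - n : ℝ) : ℂ) *
            f ((e : ℂ) * Complex.exp (Complex.I * (θ : ℂ))) *
            (Complex.I * (e : ℂ) * Complex.exp (Complex.I * (θ : ℂ)))) +
        2 * Complex.I * (-1) ^ (n + 1) * ((Real.sin (Real.pi * α) : ℝ) : ℂ) *
          ∑ k ∈ Finset.range n,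
            ((e ^ (α - n + k) : ℝ) : ℂ) * iteratedDeriv k f 0 /
              ((k.factorial : ℂ) * (((n : ℝ) - α - k : ℝ) : ℂ)))
      (𝓝[>] 0) (𝓝 0) := by
  obtain ⟨F, hF, hfF⟩ :=
    (hf.analyticAt (Metric.ball_mem_nhds 0 hr)).exists_eq_sum_add_pow_mul n
  obtain ⟨δ, hδ, hFδ⟩ := Metric.eventually_nhds_iff.mp
    (hF.continuousAt.norm.eventually (gt_mem_nhds (lt_add_one ‖F 0‖)))
  set M := ‖F 0‖ + 1
  refine squeeze_zero_norm' (a := fun ε => 2 * π * M * ε ^ α) ?_ ?_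
  · filter_upwards [Ioo_mem_nhdsGT (lt_min hδ hr)] with ε ⟨hε, hεδr⟩
    change ‖negCpowCircleIntegral _ ε f + _‖ ≤ _
    rw [negCpowCircleIntegral_eq_taylorPoly_add hα1 hε (hεδr.trans_le (min_le_right _ _))
      hf.continuousOn, neg_add_cancel_comm]
    have hrem : ∀ z : ℂ, ‖z‖ = ε →
        ‖f z - ∑ k ∈ Finset.range n, (z ^ k / k.factorial) • iteratedDeriv k f 0‖ ≤ ε ^ n * M :=
      fun z hz => by
        rw [hfF z, add_sub_cancel_left, norm_smul, norm_pow, hz]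
        gcongr
        exact (hFδ (by rw [dist_zero_right, hz]; exact hεδr.trans_le (min_le_left _ _))).le
    have hpow : ε ^ (α - 1 - n + 1) * ε ^ n = ε ^ α := by
      rw [← rpow_add_natCast hε.ne']; ring_nf
    calc _ ≤ 2 * π * ε ^ (α - 1 - n + 1) * (ε ^ n * M) := norm_negCpowCircleIntegral_le _ hε hrem
      _ = 2 * π * M * ε ^ α := by rw [← hpow]; ring
  · exact ((continuous_const.mul (continuous_rpow_const hα0.le)).tendsto' 0 0
      (by simp [zero_rpow hα0.ne'])).mono_left nhdsWithin_le_nhds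

theorem stmt_6 (n : ℕ) (hn : 1 ≤ n) (α : ℝ) (hα0 : 0 < α) (hα1 : α < 1)
    (f : ℂ → ℂ) (r : ℝ) (hr : 0 < r)
    (hf : AnalyticOn ℂ f (Metric.ball (0 : ℂ) r)) :
    Tendsto (fun e : ℝ =>
      (∫ θ in (0 : ℝ)..(2 * Real.pi),
          ((e : ℂ) * Complex.exp (Complex.I * ((θ - Real.pi : ℝ) : ℂ))) ^ ((α - 1 - n : ℝ) : ℂ) *
            f ((e : ℂ) * Complex.exp (Complex.I * (θ : ℂ))) *
            (Complex.I * (e : ℂ) * Complex.exp (Complex.I * (θ : ℂ)))) +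
        2 * Complex.I * (-1) ^ (n + 1) * ((Real.sin (Real.pi * α) : ℝ) : ℂ) *
          ∑ k ∈ Finset.range n,
            ((e ^ (α - n + k) : ℝ) : ℂ) * iteratedDeriv k f 0 /
              ((k.factorial : ℂ) * (((n : ℝ) - α - k : ℝ) : ℂ)))
      (𝓝[>] 0) (𝓝 0) :=
  stmt_6_general n α hα0 hα1 f r hr hf
end

section
/- For 0 < α < 1 and n = 2m an even positive integer, the Hadamard finite-part integral f.p.∫_0^∞ x^{α-1-n}/(1+x²) dx equals (−1)^m (π/2)/sin(πα/2). -/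
open MeasureTheory Real Set Filter Topology

/-!
For `x > 0`, `x ^ (q - 2) / (1 + x ^ 2) = x ^ (q - 2) - x ^ q / (1 + x ^ 2)`. Applying this
`m` times to the integral over `(ε, ∞)` peels off exactly the Taylor counterterms of
`1 / (1 + x ^ 2)`, whose coefficients are `(-1) ^ j` in degree `2 j` and `0` in odd degree, so the
regularised integral equals `(-1) ^ m ∫_ε^∞ x ^ (α - 1) / (1 + x ^ 2) dx` for every `ε > 0`.
As `ε → 0` this tends to `(-1) ^ m` times a Mellin transform, which the substitutions `u = x ^ 2`
and `t = u / (1 + u)` turn into the Beta integral `B(α/2, 1 - α/2) = π / sin (π α / 2)`.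
-/

noncomputable def invOneAddSqCoeff (n : ℕ) : ℝ := if Even n then (-1) ^ (n / 2) else 0

lemma invOneAddSqCoeff_two_mul (j : ℕ) : invOneAddSqCoeff (2 * j) = (-1) ^ j := by
  simp [invOneAddSqCoeff]

lemma invOneAddSqCoeff_two_mul_add_one (j : ℕ) : invOneAddSqCoeff (2 * j + 1) = 0 := by
  simp [invOneAddSqCoeff]

lemma hasFPowerSeriesOnBall_one_div_one_add_sq :
    HasFPowerSeriesOnBall (fun x : ℝ => 1 / (1 + x ^ 2))
      (FormalMultilinearSeries.ofScalars ℝ invOneAddSqCoeff) 0 1 := by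
  refine ⟨FormalMultilinearSeries.le_radius_of_bound _ 1 fun n => ?_, one_pos, fun {y} hy => ?_⟩
  · rw [FormalMultilinearSeries.ofScalars_norm]
    unfold invOneAddSqCoeff
    split_ifs <;> simp
  · simp only [Metric.mem_eball, edist_dist, dist_zero_right, ENNReal.ofReal_lt_one] at hy
    have hgeom := hasSum_geometric_of_norm_lt_one (ξ := -y ^ 2)
      (by simpa [sq_lt_one_iff_abs_lt_one, abs_lt] using hy)
    rw [sub_neg_eq_add, ← one_div] at hgeom
    simp only [FormalMultilinearSeries.ofScalars_apply_eq, smul_eq_mul, zero_add]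
    simpa using HasSum.even_add_odd (f := fun n => invOneAddSqCoeff n * y ^ n) (m' := 0)
      (by simpa [invOneAddSqCoeff_two_mul, pow_mul, ← mul_pow] using hgeom)
      (by simp [invOneAddSqCoeff_two_mul_add_one])

lemma iteratedDeriv_one_div_one_add_sq_zero (k : ℕ) :
    iteratedDeriv k (fun x : ℝ => 1 / (1 + x ^ 2)) 0 = k.factorial * invOneAddSqCoeff k := by
  rw [iteratedDeriv_eq_iteratedFDeriv,
    ← hasFPowerSeriesOnBall_one_div_one_add_sq.factorial_smul (1 : ℝ) k,
    FormalMultilinearSeries.ofScalars_apply_eq]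
  simp [mul_comm]

lemma Finset.sum_range_two_mul_eq_sum_pairs {M : Type*} [AddCommMonoid M] (f : ℕ → M) (m : ℕ) :
    ∑ k ∈ Finset.range (2 * m), f k = ∑ j ∈ Finset.range m, (f (2 * j) + f (2 * j + 1)) := by
  induction m with
  | zero => simp
  | succ m ih =>
    rw [Finset.sum_range_succ, ← ih, Nat.mul_succ, Finset.sum_range_succ, Finset.sum_range_succ,
      add_assoc]

section RpowDivOneAddSq

variable {q x : ℝ}

lemma continuousOn_rpow_div_one_add_sq (q : ℝ) :
    ContinuousOn (fun x : ℝ => x ^ q / (1 + x ^ 2)) (Ioi 0) :=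
  ((continuousOn_id.rpow_const fun x hx => Or.inl (ne_of_gt hx)).div (by fun_prop))
    fun x _ => by positivity

lemma rpow_div_one_add_sq_le_rpow (hx : 0 < x) : x ^ q / (1 + x ^ 2) ≤ x ^ q :=
  div_le_self (by positivity) (by nlinarith)

lemma rpow_div_one_add_sq_le_rpow_sub_two (hx : 0 < x) : x ^ q / (1 + x ^ 2) ≤ x ^ (q - 2) := by
  rw [rpow_sub hx, rpow_two]
  exact div_le_div_of_nonneg_left (by positivity) (by positivity) (by linarith)

lemma integrableOn_Ioi_rpow_div_one_add_sq {e : ℝ} (he : 0 < e) (hq : q < 1) :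
    IntegrableOn (fun x : ℝ => x ^ q / (1 + x ^ 2)) (Ioi e) := by
  refine (integrableOn_Ioi_rpow_of_lt (by linarith : q - 2 < -1) he).mono'
    ((continuousOn_rpow_div_one_add_sq q).mono (Ioi_subset_Ioi he.le)
      |>.aestronglyMeasurable measurableSet_Ioi) ?_
  refine (ae_restrict_iff' measurableSet_Ioi).2 (ae_of_all _ fun x hx => ?_)
  have hx : 0 < x := he.trans hx
  rw [norm_of_nonneg (by positivity)]
  exact rpow_div_one_add_sq_le_rpow_sub_two hx

lemma integrableOn_Ioi_zero_rpow_div_one_add_sq (hq₀ : -1 < q) (hq₁ : q < 1) :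
    IntegrableOn (fun x : ℝ => x ^ q / (1 + x ^ 2)) (Ioi 0) := by
  rw [← Ioc_union_Ioi_eq_Ioi zero_le_one]
  refine IntegrableOn.union ?_ (integrableOn_Ioi_rpow_div_one_add_sq one_pos hq₁)
  refine ((intervalIntegral.intervalIntegrable_rpow' hq₀).1).mono'
    ((continuousOn_rpow_div_one_add_sq q).mono Ioc_subset_Ioi_self
      |>.aestronglyMeasurable measurableSet_Ioc) ?_
  refine (ae_restrict_iff' measurableSet_Ioc).2 (ae_of_all _ fun x hx => ?_)
  rw [norm_of_nonneg (by have := hx.1; positivity)]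
  exact rpow_div_one_add_sq_le_rpow hx.1

lemma rpow_sub_two_div_one_add_sq (hx : 0 < x) :
    x ^ (q - 2) / (1 + x ^ 2) = x ^ (q - 2) - x ^ q / (1 + x ^ 2) := by
  have : x ^ q = x ^ (q - 2) * x ^ 2 := by rw [rpow_sub hx, rpow_two]; field_simp
  rw [this]
  field_simp
  ring

end RpowDivOneAddSq

section Recurrence

variable {e : ℝ}

lemma integral_Ioi_rpow_sub_two_div_one_add_sq (he : 0 < e) {q : ℝ} (hq : q < 1) :
    ∫ x in Ioi e, x ^ (q - 2) / (1 + x ^ 2)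
      = e ^ (q - 1) / (1 - q) - ∫ x in Ioi e, x ^ q / (1 + x ^ 2) := by
  rw [setIntegral_congr_fun measurableSet_Ioi fun x hx => rpow_sub_two_div_one_add_sq (he.trans hx),
    integral_sub (integrableOn_Ioi_rpow_of_lt (by linarith) he)
      (integrableOn_Ioi_rpow_div_one_add_sq he hq),
    integral_Ioi_rpow_of_lt (by linarith) he, show q - 2 + 1 = q - 1 by ring, neg_div, ← div_neg,
    neg_sub]

lemma integral_Ioi_rpow_div_one_add_sq_eq_sum (he : 0 < e) {q : ℝ} (k : ℕ) (hq : q + 2 * k < 1) :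
    ∫ x in Ioi e, x ^ q / (1 + x ^ 2)
      = ∑ j ∈ Finset.range k, (-1) ^ j * e ^ (q + 2 * j + 1) / -(q + 2 * j + 1)
        + (-1) ^ k * ∫ x in Ioi e, x ^ (q + 2 * k) / (1 + x ^ 2) := by
  induction k with
  | zero => simp
  | succ k ih =>
    push_cast at hq ⊢
    have hstep := integral_Ioi_rpow_sub_two_div_one_add_sq he hq
    rw [show q + 2 * (k + 1) - 2 = q + 2 * k by ring,
      show q + 2 * (k + 1) - 1 = q + 2 * k + 1 by ring,
      show 1 - (q + 2 * (k + 1)) = -(q + 2 * k + 1) by ring] at hstep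
    rw [ih (by linarith), hstep, Finset.sum_range_succ]
    ring

end Recurrence

lemma sum_range_two_mul_iteratedDeriv_one_div_one_add_sq (α e : ℝ) (m : ℕ) :
    ∑ k ∈ Finset.range (2 * m), e ^ (α - (2 * m : ℕ) + k) *
        iteratedDeriv k (fun x : ℝ => 1 / (1 + x ^ 2)) 0 / (k.factorial * ((2 * m : ℕ) - α - k))
      = ∑ j ∈ Finset.range m,
          (-1) ^ j * e ^ (α - 1 - (2 * m : ℕ) + 2 * j + 1) /
            -(α - 1 - (2 * m : ℕ) + 2 * j + 1) := by
  rw [Finset.sum_range_two_mul_eq_sum_pairs]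
  refine Finset.sum_congr rfl fun j _ => ?_
  simp only [iteratedDeriv_one_div_one_add_sq_zero, invOneAddSqCoeff_two_mul,
    invOneAddSqCoeff_two_mul_add_one, mul_zero, zero_div, add_zero]
  rw [show α - 1 - (2 * m : ℕ) + 2 * j + 1 = α - (2 * m : ℕ) + (2 * j : ℕ) by push_cast; ring,
    neg_add', neg_sub]
  field_simp

lemma integral_Ioo_rpow_mul_one_sub_rpow_neg {s : ℝ} (hs₀ : 0 < s) (hs₁ : s < 1) :
    ∫ x in Ioo (0 : ℝ) 1, x ^ (s - 1) * (1 - x) ^ (-s) = π / sin (π * s) := by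
  have hbeta : Complex.betaIntegral s (1 - s) = ((π / sin (π * s) : ℝ) : ℂ) := by
    rw [Complex.betaIntegral_eq_Gamma_mul_div _ _ (by simpa) (by simpa), add_sub_cancel,
      Complex.Gamma_one, div_one, Complex.Gamma_mul_Gamma_one_sub]
    push_cast
    rfl
  rw [← integral_Ioc_eq_integral_Ioo, ← intervalIntegral.integral_of_le zero_le_one,
    ← Complex.ofReal_inj, ← hbeta, Complex.betaIntegral, ← intervalIntegral.integral_ofReal]
  refine intervalIntegral.integral_congr fun x hx => ?_
  rw [uIcc_of_le zero_le_one] at hx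
  push_cast
  rw [Complex.ofReal_cpow hx.1, Complex.ofReal_cpow (by linarith [hx.2])]
  push_cast
  ring_nf

lemma image_div_one_add_Ioi : (fun u : ℝ => u / (1 + u)) '' Ioi 0 = Ioo 0 1 := by
  ext x
  constructor
  · rintro ⟨u, hu : 0 < u, rfl⟩
    exact ⟨by positivity, (div_lt_one (by positivity)).2 (by linarith)⟩
  · rintro ⟨hx₀, hx₁⟩
    have : 0 < 1 - x := by linarith
    refine ⟨x / (1 - x), div_pos hx₀ this, ?_⟩
    field_simp
    ring

lemma injOn_div_one_add_Ioi : InjOn (fun u : ℝ => u / (1 + u)) (Ioi 0) := by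
  intro a (ha : 0 < a) b (hb : 0 < b) hab
  field_simp at hab
  linarith

lemma integral_Ioi_rpow_div_one_add {s : ℝ} (hs₀ : 0 < s) (hs₁ : s < 1) :
    ∫ u in Ioi (0 : ℝ), u ^ (s - 1) / (1 + u) = π / sin (π * s) := by
  have hderiv (u : ℝ) (hu : u ∈ Ioi 0) :
      HasDerivWithinAt (fun u : ℝ => u / (1 + u)) (((1 + u) ^ 2)⁻¹) (Ioi 0) u := by
    have h1 : 1 + u ≠ 0 := by have : 0 < u := hu; positivity
    refine (((hasDerivAt_id' u).div ((hasDerivAt_id' u).const_add 1) h1).congr_deriv ?_)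
      |>.hasDerivWithinAt
    field_simp
    ring
  rw [← integral_Ioo_rpow_mul_one_sub_rpow_neg hs₀ hs₁, ← image_div_one_add_Ioi,
    integral_image_eq_integral_abs_deriv_smul measurableSet_Ioi hderiv injOn_div_one_add_Ioi]
  refine setIntegral_congr_fun measurableSet_Ioi fun u (hu : 0 < u) => ?_
  have h1 : 0 < 1 + u := by linarith
  rw [smul_eq_mul, one_sub_div h1.ne', add_sub_cancel_right, div_rpow hu.le h1.le,
    div_rpow zero_le_one h1.le, one_rpow, rpow_neg h1.le, rpow_sub_one h1.ne',
    abs_of_pos (by positivity)]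
  field_simp

lemma integral_Ioi_rpow_div_one_add_sq {α : ℝ} (hα₀ : 0 < α) (hα₂ : α < 2) :
    ∫ x in Ioi (0 : ℝ), x ^ (α - 1) / (1 + x ^ 2) = π / 2 / sin (π * α / 2) := by
  have hsub := integral_comp_rpow_Ioi_of_pos (g := fun u : ℝ => u ^ (α / 2 - 1) / (1 + u)) two_pos
  rw [integral_Ioi_rpow_div_one_add (by linarith) (by linarith), mul_div_assoc'] at hsub
  rw [div_right_comm, ← hsub, ← integral_div]
  refine setIntegral_congr_fun measurableSet_Ioi fun x (hx : 0 < x) => ?_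
  rw [smul_eq_mul, ← rpow_mul hx.le, show 2 * (α / 2 - 1) = α - 1 - 1 by ring,
    rpow_sub_one hx.ne' (α - 1), show (2 : ℝ) - 1 = 1 by norm_num, rpow_one, rpow_two]
  field_simp

theorem stmt_9_general (α : ℝ) (hα0 : 0 < α) (hα1 : α < 1) (m : ℕ) :
    Tendsto (fun e : ℝ =>
        (∫ x in Ioi e, x ^ (α - 1 - (2 * m : ℕ)) / (1 + x ^ 2)) -
          ∑ k ∈ Finset.range (2 * m),
            e ^ (α - (2 * m : ℕ) + k) *
              iteratedDeriv k (fun x : ℝ => 1 / (1 + x ^ 2)) 0 /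
                ((k.factorial : ℝ) * (((2 * m : ℕ) : ℝ) - α - k)))
      (𝓝[>] 0)
      (𝓝 ((-1) ^ m * (Real.pi / 2) / Real.sin (Real.pi * α / 2))) := by
  have hint : IntegrableOn (fun x : ℝ => x ^ (α - 1) / (1 + x ^ 2)) (Ioi 0) :=
    integrableOn_Ioi_zero_rpow_div_one_add_sq (by linarith) (by linarith)
  have hlim := (hint.continuousWithinAt_Ici_primitive_Ioi.mono Ioi_subset_Ici_self).tendsto
    |>.mul_const ((-1 : ℝ) ^ m)
  rw [integral_Ioi_rpow_div_one_add_sq hα0 (by linarith), div_mul_eq_mul_div, mul_comm] at hlim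
  refine hlim.congr' (eventually_nhdsWithin_of_forall fun e (he : 0 < e) => ?_)
  dsimp only
  rw [integral_Ioi_rpow_div_one_add_sq_eq_sum (q := α - 1 - (2 * m : ℕ)) he m
      (by push_cast; linarith),
    sum_range_two_mul_iteratedDeriv_one_div_one_add_sq,
    show α - 1 - (2 * m : ℕ) + 2 * m = α - 1 by push_cast; ring]
  ring

theorem stmt_9 (α : ℝ) (hα0 : 0 < α) (hα1 : α < 1) (m : ℕ) (hm : 1 ≤ m) :
    Tendsto (fun e : ℝ =>
        (∫ x in Ioi e, x ^ (α - 1 - (2 * m : ℕ)) / (1 + x ^ 2)) -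
          ∑ k ∈ Finset.range (2 * m),
            e ^ (α - (2 * m : ℕ) + k) *
              iteratedDeriv k (fun x : ℝ => 1 / (1 + x ^ 2)) 0 /
                ((k.factorial : ℝ) * (((2 * m : ℕ) : ℝ) - α - k)))
      (𝓝[>] 0)
      (𝓝 ((-1) ^ m * (Real.pi / 2) / Real.sin (Real.pi * α / 2))) :=
  stmt_9_general α hα0 hα1 m
end

section
/- For 0 < α < 1, f.p.∫_0^∞ x^{α-2} e^{-x} dx = −Γ(α)/(1-α) = Γ(α-1). -/
/-! Integrating by parts, `(α - 1) ∫_ε^∞ x^(α-2) e^(-x) dx = ∫_ε^∞ x^(α-1) e^(-x) dx - ε^(α-1) e^(-ε)`.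
After subtracting the counterterm `ε^(α-1)/(1-α)` what is left besides the Gamma integral is
`ε^(α-1) (1 - e^(-ε)) / (α - 1) = O(ε^α)`, which vanishes as `ε → 0⁺`, while
`∫_ε^∞ x^(α-1) e^(-x) dx → Γ(α)`. -/

open MeasureTheory Real Set Filter Topology

theorem tendsto_setIntegral_Ioi_nhdsGT {E : Type*} [NormedAddCommGroup E] [NormedSpace ℝ E]
    {f : ℝ → E} {a : ℝ} (hf : IntegrableOn f (Ioi a)) :
    Tendsto (fun e => ∫ x in Ioi e, f x) (𝓝[>] a) (𝓝 (∫ x in Ioi a, f x)) := by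
  have hIoc : Tendsto (fun e => ∫ x in Ioc a e, f x) (𝓝[>] a) (𝓝 0) := by
    have hvol : Tendsto (fun e => volume.restrict (Ioi a) (Ioc a e)) (𝓝[>] a) (𝓝 0) := by
      have : Tendsto (fun e => ENNReal.ofReal (e - a)) (𝓝 a) (𝓝 0) := by
        simpa using ENNReal.tendsto_ofReal ((tendsto_id (x := 𝓝 a)).sub_const a)
      refine (this.mono_left nhdsWithin_le_nhds).congr fun e => ?_
      rw [Measure.restrict_apply measurableSet_Ioc, Ioc_inter_Ioi, max_self, volume_Ioc]
    simpa only [Measure.restrict_restrict measurableSet_Ioc, Ioc_inter_Ioi, max_self] using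
      hf.tendsto_setIntegral_nhds_zero hvol
  have hsplit : ∀ e, a < e → ∫ x in Ioi a, f x = (∫ x in Ioc a e, f x) + ∫ x in Ioi e, f x :=
    fun e he => by
      rw [← setIntegral_union (Ioc_disjoint_Ioi le_rfl) measurableSet_Ioi
        (hf.mono_set Ioc_subset_Ioi_self) (hf.mono_set (Ioi_subset_Ioi he.le)),
        Ioc_union_Ioi_eq_Ioi he.le]
  simpa using (tendsto_const_nhds (x := ∫ x in Ioi a, f x)).sub hIoc |>.congr' <|
    eventually_nhdsWithin_of_forall fun e he => by rw [hsplit e he, add_sub_cancel_left]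

theorem integrableOn_rpow_mul_exp_neg_Ioi (s : ℝ) {e : ℝ} (he : 0 < e) :
    IntegrableOn (fun x : ℝ => x ^ s * exp (-x)) (Ioi e) :=
  integrable_of_isBigO_exp_neg one_half_pos
    ((continuousOn_id.rpow_const fun _ hx => Or.inl (he.trans_le hx).ne').mul
      continuousOn_id.neg.rexp)
    ((Gamma_integrand_isLittleO s).isBigO.congr_left fun _ => mul_comm _ _)

theorem hasDerivAt_rpow_mul_exp_neg (s : ℝ) {x : ℝ} (hx : x ≠ 0) :
    HasDerivAt (fun x : ℝ => x ^ s * exp (-x))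
      (s * (x ^ (s - 1) * exp (-x)) - x ^ s * exp (-x)) x :=
  ((hasDerivAt_rpow_const (Or.inl hx)).fun_mul (hasDerivAt_neg x).exp).congr_deriv (by ring)

theorem mul_integral_Ioi_rpow_sub_one_mul_exp_neg (s : ℝ) {e : ℝ} (he : 0 < e) :
    s * ∫ x in Ioi e, x ^ (s - 1) * exp (-x) =
      (∫ x in Ioi e, x ^ s * exp (-x)) - e ^ s * exp (-e) := by
  have hint := integrableOn_rpow_mul_exp_neg_Ioi s he
  have hint' := (integrableOn_rpow_mul_exp_neg_Ioi (s - 1) he).const_mul s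
  have hFTC := integral_Ioi_of_hasDerivAt_of_tendsto'
    (fun x hx => hasDerivAt_rpow_mul_exp_neg s (he.trans_le hx).ne')
    (hint'.sub hint)
    (by simpa using tendsto_rpow_mul_exp_neg_mul_atTop_nhds_zero s 1 one_pos)
  rw [integral_sub hint' hint, integral_const_mul] at hFTC
  linarith

theorem tendsto_integral_Ioi_rpow_mul_exp_neg_nhdsGT_zero {s : ℝ} (hs : 0 < s) :
    Tendsto (fun e => ∫ x in Ioi e, x ^ (s - 1) * exp (-x)) (𝓝[>] 0) (𝓝 (Gamma s)) := by
  have hint := (GammaIntegral_convergent hs).congr_fun (fun x _ => mul_comm _ _) measurableSet_Ioi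
  convert tendsto_setIntegral_Ioi_nhdsGT hint using 2
  rw [Gamma_eq_integral hs]
  exact setIntegral_congr_fun measurableSet_Ioi fun x _ => mul_comm _ _

theorem tendsto_rpow_mul_one_sub_exp_neg_nhdsGT_zero {s : ℝ} (hs : -1 < s) :
    Tendsto (fun e : ℝ => e ^ s * (1 - exp (-e))) (𝓝[>] 0) (𝓝 0) := by
  have hpow : Tendsto (fun e : ℝ => e ^ (s + 1)) (𝓝[>] 0) (𝓝 0) := by
    have := (continuousAt_rpow_const 0 (s + 1) (Or.inr (by linarith))).tendsto
    rw [zero_rpow (by linarith)] at this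
    exact this.mono_left nhdsWithin_le_nhds
  refine squeeze_zero' ?_ ?_ hpow <;> filter_upwards [self_mem_nhdsWithin] with e (he : 0 < e)
  · have : exp (-e) ≤ 1 := exp_le_one_iff.mpr (by linarith)
    have := rpow_pos_of_pos he s
    nlinarith
  · rw [rpow_add_one he.ne']
    have : 1 - exp (-e) ≤ e := by linarith [add_one_le_exp (-e)]
    have := rpow_pos_of_pos he s
    nlinarith

theorem stmt_12 (α : ℝ) (hα0 : 0 < α) (hα1 : α < 1) :
    Tendsto (fun e : ℝ =>
        (∫ x in Ioi e, x ^ (α - 2) * Real.exp (-x)) - e ^ (α - 1) / (1 - α))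
      (𝓝[>] 0) (𝓝 (-Real.Gamma α / (1 - α))) ∧
    -Real.Gamma α / (1 - α) = Real.Gamma (α - 1) := by
  have hα1' : α - 1 ≠ 0 := by linarith
  have hvalue : -Real.Gamma α / (1 - α) = Real.Gamma α / (α - 1) := by
    rw [← neg_sub, div_neg, neg_div, neg_neg]
  refine ⟨?_, ?_⟩
  · have hlim := ((tendsto_integral_Ioi_rpow_mul_exp_neg_nhdsGT_zero hα0).add
      (tendsto_rpow_mul_one_sub_exp_neg_nhdsGT_zero (s := α - 1) (by linarith))).div_const (α - 1)
    rw [add_zero, ← hvalue] at hlim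
    refine hlim.congr' ?_
    filter_upwards [self_mem_nhdsWithin] with e (he : 0 < e)
    have hparts := mul_integral_Ioi_rpow_sub_one_mul_exp_neg (α - 1) he
    rw [show α - 1 - 1 = α - 2 by ring] at hparts
    have h1α : 1 - α ≠ 0 := by linarith
    rw [div_eq_iff hα1']
    field_simp
    linear_combination (α - 1) * hparts
  · rw [hvalue, div_eq_iff hα1', mul_comm, ← Gamma_add_one hα1', sub_add_cancel]
end

section
/- Suppose g : ℝ → ℂ satisfies |g(v)| ≤ C exp(−c₁ exp(c₂|v|)) for all real v, with C, c₁, c₂ > 0. Then for any h > 0 and integer N ≥ 0, the truncation error of the trapezoidal sum satisfies h·∑_{|k|>N} |g(kh)| ≤ 2C·h·∑_{k>N} exp(−c₁ exp(c₂ kh)) ≤ (2C/(c₁c₂)) exp(−c₁ exp(c₂ N h)) + C·h·exp(−c₁ exp(c₂ (N+1) h)), and in particular h·∑_{|k|>N} |g(kh)| ≤ (2C(1 + c₁c₂ h)/(c₁c₂)) exp(−c₁ exp(c₂ N h)). -/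
open Real

set_option maxHeartbeats 1000000 in

theorem stmt_15 (g : ℝ → ℂ) (C c₁ c₂ : ℝ) (hC : 0 < C) (hc₁ : 0 < c₁) (hc₂ : 0 < c₂)
    (hg : ∀ v : ℝ, ‖g v‖ ≤ C * Real.exp (-c₁ * Real.exp (c₂ * |v|)))
    (h : ℝ) (hh : 0 < h) (N : ℕ) :
    h * (∑' k : {k : ℤ // (N : ℤ) < |k|}, ‖g ((k : ℤ) * h)‖) ≤
      2 * C * h * ∑' j : ℕ, Real.exp (-c₁ * Real.exp (c₂ * (((N : ℝ) + 1 + j) * h))) ∧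
    2 * C * h * (∑' j : ℕ, Real.exp (-c₁ * Real.exp (c₂ * (((N : ℝ) + 1 + j) * h)))) ≤
      (2 * C / (c₁ * c₂)) * Real.exp (-c₁ * Real.exp (c₂ * N * h)) +
        C * h * Real.exp (-c₁ * Real.exp (c₂ * ((N : ℝ) + 1) * h)) ∧
    h * (∑' k : {k : ℤ // (N : ℤ) < |k|}, ‖g ((k : ℤ) * h)‖) ≤
      (2 * C * (1 + c₁ * c₂ * h) / (c₁ * c₂)) * Real.exp (-c₁ * Real.exp (c₂ * N * h)) := by
  set a : ℕ → ℝ := fun j => Real.exp (-c₁ * Real.exp (c₂ * (((N : ℝ) + 1 + j) * h))) with ha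
  set q : ℝ := Real.exp (-(c₁ * c₂ * h)) with hqdef
  set A : ℝ := Real.exp (-c₁ * Real.exp (c₂ * N * h)) with hAdef
  have hq0 : 0 < q := Real.exp_pos _
  have hq1 : q < 1 := by
    rw [hqdef, Real.exp_lt_one_iff]
    nlinarith [mul_pos (mul_pos hc₁ hc₂) hh]
  have hA0 : 0 < A := Real.exp_pos _
  -- pointwise bound a j ≤ A * q ^ (j+1)
  have key : ∀ j : ℕ, a j ≤ A * q ^ (j + 1) := by
    intro j
    have hqpow : q ^ (j + 1) = Real.exp (-(c₁ * c₂ * h) * (j + 1)) := by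
      rw [hqdef, ← Real.exp_nat_mul]
      congr 1
      push_cast
      ring
    rw [ha, hAdef, hqpow, ← Real.exp_add]
    apply Real.exp_le_exp.mpr
    have hx : (0:ℝ) ≤ c₂ * N * h := by positivity
    have hmain : Real.exp (c₂ * N * h) + c₂ * ((j:ℝ)+1) * h ≤
        Real.exp (c₂ * (((N : ℝ) + 1 + j) * h)) := by
      have h1 : Real.exp (c₂ * (((N : ℝ) + 1 + j) * h)) =
          Real.exp (c₂ * N * h) * Real.exp (c₂ * ((j:ℝ)+1) * h) := by
        rw [← Real.exp_add]; ring_nf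
      rw [h1]
      have h2 : (1:ℝ) + c₂ * ((j:ℝ)+1) * h ≤ Real.exp (c₂ * ((j:ℝ)+1) * h) := by
        have := Real.add_one_le_exp (c₂ * ((j:ℝ)+1) * h); linarith
      have h3 : (1:ℝ) ≤ Real.exp (c₂ * N * h) := Real.one_le_exp hx
      have ht : (0:ℝ) ≤ c₂ * ((j:ℝ)+1) * h := by positivity
      nlinarith [mul_le_mul_of_nonneg_left h2 (Real.exp_pos (c₂ * N * h)).le,
        mul_le_mul_of_nonneg_right h3 ht]
    push_cast
    nlinarith
  have hgeom0 : Summable (fun j : ℕ => q ^ (j + 1)) :=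
    ((summable_geometric_of_lt_one hq0.le hq1).mul_left q).congr (by
      intro j; rw [pow_succ, mul_comm])
  have hgeom : Summable (fun j : ℕ => A * q ^ (j + 1)) := hgeom0.mul_left A
  have ha_nonneg : ∀ j, 0 ≤ a j := fun j => (Real.exp_pos _).le
  have hsa : Summable a := Summable.of_nonneg_of_le ha_nonneg key hgeom
  -- sum of a bounded by A * (q/(1-q))
  have hsum_a : ∑' j, a j ≤ A * (q * (1 - q)⁻¹) := by
    calc ∑' j, a j ≤ ∑' j, A * q ^ (j+1) := Summable.tsum_le_tsum key hsa hgeom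
      _ = A * ∑' j, q ^ (j + 1) := tsum_mul_left
      _ = A * (q * ∑' j, q ^ j) := by
          congr 1
          rw [← tsum_mul_left]
          exact tsum_congr fun j => by rw [pow_succ, mul_comm]
      _ = A * (q * (1 - q)⁻¹) := by rw [tsum_geometric_of_lt_one hq0.le hq1]
  have h1q : 0 < 1 - q := by linarith
  have hkey2 : h * (q * (1 - q)⁻¹) ≤ (c₁ * c₂)⁻¹ := by
    have hu : 0 < c₁ * c₂ * h := by positivity
    have hexp : c₁ * c₂ * h + 1 ≤ Real.exp (c₁ * c₂ * h) := Real.add_one_le_exp _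
    have hqe : q * Real.exp (c₁ * c₂ * h) = 1 := by
      rw [hqdef, ← Real.exp_add]; simp
    have hstep : c₁ * c₂ * h * q ≤ 1 - q := by nlinarith
    have h2 : h * (q * (1 - q)⁻¹) = (h * q) / (1 - q) := by ring
    rw [h2, div_le_iff₀ h1q]
    have hcc : 0 < c₁ * c₂ := by positivity
    have hinv : (c₁ * c₂) * (c₁ * c₂)⁻¹ = 1 := mul_inv_cancel₀ hcc.ne'
    nlinarith [mul_pos (inv_pos.mpr hcc) h1q, inv_pos.mpr hcc]
  -- combined bound for the a-sum
  have hha : h * ∑' j, a j ≤ (c₁ * c₂)⁻¹ * A := by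
    calc h * ∑' j, a j ≤ h * (A * (q * (1 - q)⁻¹)) := by
          apply mul_le_mul_of_nonneg_left hsum_a hh.le
      _ = A * (h * (q * (1 - q)⁻¹)) := by ring
      _ ≤ A * (c₁ * c₂)⁻¹ := mul_le_mul_of_nonneg_left hkey2 hA0.le
      _ = (c₁ * c₂)⁻¹ * A := by ring
  -- Part 1 setup: indicator function on ℤ
  set F : ℤ → ℝ := Set.indicator {k : ℤ | (N : ℤ) < |k|} (fun k => ‖g ((k : ℝ) * h)‖) with hF
  have hF_nonneg : ∀ k, 0 ≤ F k := fun k =>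
    Set.indicator_nonneg (fun _ _ => norm_nonneg _) _
  have habs : ∀ k : ℤ, |(k : ℝ) * h| = (k.natAbs : ℝ) * h := by
    intro k
    rw [abs_mul, abs_of_pos hh]
    congr 1
    rw [Nat.cast_natAbs]
    exact Int.cast_abs.symm
  have hF_le : ∀ k : ℤ, F k ≤ C * q ^ k.natAbs := by
    intro k
    have h1 : F k ≤ ‖g ((k : ℝ) * h)‖ := by
      rw [hF]
      by_cases hk : k ∈ {k : ℤ | (N : ℤ) < |k|}
      · rw [Set.indicator_of_mem hk]
      · rw [Set.indicator_of_notMem hk]; exact norm_nonneg _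
    have h2 := hg ((k : ℝ) * h)
    rw [habs k] at h2
    have h3 : Real.exp (-c₁ * Real.exp (c₂ * ((k.natAbs : ℝ) * h))) ≤ q ^ k.natAbs := by
      have hp : q ^ k.natAbs = Real.exp (-(c₁ * c₂ * h) * k.natAbs) := by
        rw [hqdef, ← Real.exp_nat_mul]; ring_nf
      rw [hp]
      apply Real.exp_le_exp.mpr
      have he : c₂ * ((k.natAbs : ℝ) * h) ≤ Real.exp (c₂ * ((k.natAbs : ℝ) * h)) :=
        (Real.add_one_le_exp _).trans' (by linarith)
      nlinarith
    nlinarith [norm_nonneg (g ((k : ℝ) * h)), Real.exp_pos (-c₁ * Real.exp (c₂ * ((k.natAbs : ℝ) * h)))]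
  have hCgeom : Summable (fun n : ℕ => C * q ^ n) :=
    (summable_geometric_of_lt_one hq0.le hq1).mul_left C
  have hFpos_sum : Summable (fun n : ℕ => F n) := by
    apply Summable.of_nonneg_of_le (fun n => hF_nonneg _) _ hCgeom
    intro n
    simpa using hF_le (n : ℤ)
  have hFneg_sum : Summable (fun n : ℕ => F (-(n + 1))) := by
    apply Summable.of_nonneg_of_le (fun n => hF_nonneg _) _ (hgeom0.mul_left C)
    intro n
    have h1 := hF_le (-(n + 1) : ℤ)
    have h2 : ((-(n + 1) : ℤ)).natAbs = n + 1 := by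
      omega
    rw [h2] at h1
    exact h1
  -- tsum over subtype equals tsum of indicator over ℤ
  have hsub : (∑' k : {k : ℤ // (N : ℤ) < |k|}, ‖g ((k : ℤ) * h)‖) = ∑' k : ℤ, F k := by
    rw [hF]
    exact tsum_subtype {k : ℤ | (N : ℤ) < |k|} (fun k => ‖g ((k : ℝ) * h)‖)
  have hsplit : ∑' k : ℤ, F k = (∑' n : ℕ, F n) + ∑' n : ℕ, F (-(n + 1)) :=
    tsum_of_nat_of_neg_add_one hFpos_sum hFneg_sum
  -- positive tail
  have hCa : Summable (fun i : ℕ => C * a i) := hsa.mul_left C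
  have hFval : ∀ i : ℕ, F ((i : ℤ) + (N + 1)) ≤ C * a i := by
    intro i
    have hmem : ((i : ℤ) + (N + 1)) ∈ {k : ℤ | (N : ℤ) < |k|} := by
      simp only [Set.mem_setOf_eq]
      rw [abs_of_nonneg (by positivity)]
      omega
    rw [hF, Set.indicator_of_mem hmem]
    have h2 := hg ((((i : ℤ) + (N + 1) : ℤ) : ℝ) * h)
    have habs2 : |((((i : ℤ) + (N + 1) : ℤ)) : ℝ) * h| = ((N : ℝ) + 1 + i) * h := by
      rw [abs_of_nonneg (by positivity)]
      push_cast
      ring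
    rw [habs2] at h2
    calc ‖g ((((i : ℤ) + (N + 1) : ℤ) : ℝ) * h)‖ ≤
        C * Real.exp (-c₁ * Real.exp (c₂ * (((N : ℝ) + 1 + i) * h))) := h2
      _ = C * a i := rfl
  have hFvalneg : ∀ i : ℕ, F (-(((i : ℤ) + N) + 1)) ≤ C * a i := by
    intro i
    have hmem : (-(((i : ℤ) + N) + 1)) ∈ {k : ℤ | (N : ℤ) < |k|} := by
      simp only [Set.mem_setOf_eq]
      rw [abs_of_nonpos (by omega)]
      omega
    rw [hF, Set.indicator_of_mem hmem]
    have h2 := hg (((-(((i : ℤ) + N) + 1) : ℤ) : ℝ) * h)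
    have habs2 : |((-(((i : ℤ) + N) + 1) : ℤ) : ℝ) * h| = ((N : ℝ) + 1 + i) * h := by
      rw [abs_mul, abs_of_pos hh, abs_of_nonpos (by push_cast; linarith [Nat.cast_nonneg (α := ℝ) i, Nat.cast_nonneg (α := ℝ) N])]
      push_cast
      ring
    rw [habs2] at h2
    exact h2
  have hpos_tail : (∑' n : ℕ, F n) ≤ C * ∑' i, a i := by
    have hshift : Summable (fun i : ℕ => F (i + (N + 1))) :=
      (summable_nat_add_iff (N + 1)).mpr hFpos_sum
    have hzero : ∑ i ∈ Finset.range (N + 1), F i = 0 := by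
      apply Finset.sum_eq_zero
      intro i hi
      simp only [Finset.mem_range] at hi
      rw [hF]
      apply Set.indicator_of_notMem
      simp only [Set.mem_setOf_eq, not_lt]
      rw [abs_of_nonneg (by positivity)]
      omega
    have heq : (∑' n : ℕ, F n) = ∑' i : ℕ, F (i + (N + 1)) := by
      rw [← Summable.sum_add_tsum_nat_add (N + 1) hFpos_sum, hzero, zero_add]
      exact tsum_congr fun i => by congr 1 <;> (push_cast; ring)
    rw [heq, ← tsum_mul_left]
    exact Summable.tsum_le_tsum hFval hshift hCa
  have hneg_tail : (∑' n : ℕ, F (-(n + 1))) ≤ C * ∑' i, a i := by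
    have hshift : Summable (fun i : ℕ => F (-(((i : ℤ) + N) + 1))) := by
      have := (summable_nat_add_iff (f := fun n : ℕ => F (-(n + 1))) N).mpr hFneg_sum
      apply this.congr
      intro i
      congr 1 <;> (push_cast; ring)
    have hzero : ∑ i ∈ Finset.range N, F (-(i + 1)) = 0 := by
      apply Finset.sum_eq_zero
      intro i hi
      simp only [Finset.mem_range] at hi
      rw [hF]
      apply Set.indicator_of_notMem
      simp only [Set.mem_setOf_eq, not_lt]
      rw [abs_of_nonpos (by omega)]
      omega
    have heq : (∑' n : ℕ, F (-(n + 1))) = ∑' i : ℕ, F (-(((i : ℤ) + N) + 1)) := by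
      rw [← Summable.sum_add_tsum_nat_add (f := fun n : ℕ => F (-(n + 1))) N hFneg_sum, hzero, zero_add]
      exact tsum_congr fun i => by congr 1 <;> (push_cast; ring)
    rw [heq, ← tsum_mul_left]
    exact Summable.tsum_le_tsum hFvalneg hshift hCa
  -- Part 1
  have part1 : h * (∑' k : {k : ℤ // (N : ℤ) < |k|}, ‖g ((k : ℤ) * h)‖) ≤
      2 * C * h * ∑' j, a j := by
    rw [hsub, hsplit]
    have : (∑' n : ℕ, F n) + (∑' n : ℕ, F (-(n + 1))) ≤ 2 * C * ∑' j, a j := by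
      have := add_le_add hpos_tail hneg_tail
      linarith
    calc h * ((∑' n : ℕ, F n) + ∑' n : ℕ, F (-(n + 1))) ≤ h * (2 * C * ∑' j, a j) :=
          mul_le_mul_of_nonneg_left this hh.le
      _ = 2 * C * h * ∑' j, a j := by ring
  -- Part 2
  have part2 : 2 * C * h * (∑' j, a j) ≤
      (2 * C / (c₁ * c₂)) * A +
        C * h * Real.exp (-c₁ * Real.exp (c₂ * ((N : ℝ) + 1) * h)) := by
    have h1 : 2 * C * h * (∑' j, a j) = 2 * C * (h * ∑' j, a j) := by ring
    have h2 : 2 * C * (h * ∑' j, a j) ≤ 2 * C * ((c₁ * c₂)⁻¹ * A) :=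
      mul_le_mul_of_nonneg_left hha (by positivity)
    have h3 : 2 * C * ((c₁ * c₂)⁻¹ * A) = (2 * C / (c₁ * c₂)) * A := by ring
    have h4 : 0 < C * h * Real.exp (-c₁ * Real.exp (c₂ * ((N : ℝ) + 1) * h)) := by positivity
    linarith
  -- Part 3
  have part3 : h * (∑' k : {k : ℤ // (N : ℤ) < |k|}, ‖g ((k : ℤ) * h)‖) ≤
      (2 * C * (1 + c₁ * c₂ * h) / (c₁ * c₂)) * A := by
    have h2 : 2 * C * h * (∑' j, a j) ≤ (2 * C / (c₁ * c₂)) * A := by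
      have h1 : 2 * C * h * (∑' j, a j) = 2 * C * (h * ∑' j, a j) := by ring
      have h2 : 2 * C * (h * ∑' j, a j) ≤ 2 * C * ((c₁ * c₂)⁻¹ * A) :=
        mul_le_mul_of_nonneg_left hha (by positivity)
      have h3' : 2 * C * ((c₁ * c₂)⁻¹ * A) = (2 * C / (c₁ * c₂)) * A := by ring
      linarith [h2, h1.le, h3'.le, h3'.ge]
    have h3 : (2 * C / (c₁ * c₂)) * A ≤ (2 * C * (1 + c₁ * c₂ * h) / (c₁ * c₂)) * A := by
      apply mul_le_mul_of_nonneg_right _ hA0.le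
      apply div_le_div_of_nonneg_right _ (by positivity)
      nlinarith [mul_pos (mul_pos hc₁ hc₂) hh]
    linarith [part1]
  exact ⟨part1, part2, part3⟩
end
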